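/- Consider an element I of a two-dimensional moving nonconforming mesh in the (r,φ)-plane satisfying the well balancing constraints: its two 'vertical' edges lie on lines r = r_{i−1/2} and r = r_{i+1/2}, its other two edges are parallel to each other, and the barycenters of I and of its two neighbors J₁, J₂ across the non-vertical edges all lie on the same line r = r_i, so that the two space-time lateral surfaces generated by the non-vertical edges have equal areas σ and opposite space-time unit normals ñ = (ñ_r, ñ_φ, ñ_t) and −ñ, and the equilibrium states satisfy Q^E_{J₁} = Q^E_{J₂} = Q^E_I = Q^E(r_i). Suppose every state entering the fluxes is the corresponding equilibrium value of a stationary solution with zero radial velocity (in particular the states across the vertical surfaces are Q^E at the neighboring radii). Then the total numerical flux sum of the first-order well balanced path-conservative ALE scheme, Σ_j σ_j · D_{I,J_j}·ñ_{I,J_j} with D(q⁻,q⁺)·ñ = ½( f(q⁺)+f(q⁻)+B(q⁺−q⁻) )ñ_r + ½( g(q⁺)+g(q⁻) )ñ_φ + ½( q⁺+q⁻ )ñ_t − ½ V(q⁺−q⁻), vanishes: the vertical-surface contributions are zero individually (f vanishes at zero-radial-velocity states, the B components vanish because all fluctuations vanish, and the well balanced HLL viscosity V vanishes), while the contributions of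 the two parallel surfaces cancel each other exactly (equal states, equal areas, opposite normals). Consequently |T_I^{n+1}| Q_I^{n+1} = |T_I^n| Q_I^n, i.e. the scheme preserves the equilibrium on such meshes. -/
import Mathlib


/-! One-dimensional discretization of the cylindrical Euler system with
gravity, written with nonconservative products.  States are described by the
primitive variables `(r, ρ, u, v, E)`; the conserved vector is
`q = (rρ, rρu, rρv, rρE, r)`. -/

/-- Primitive state `(r, ρ, u, v, E)`. -/
structure Prim where
  r : ℝ
  ρ : ℝ
  u : ℝ
  v : ℝ
  E : ℝ

/-- Pressure `P = (γ-1)ρ(E - (u²+v²)/2)`. -/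
noncomputable def pres (γ : ℝ) (a : Prim) : ℝ :=
  (γ - 1) * a.ρ * (a.E - (a.u ^ 2 + a.v ^ 2) / 2)

/-- Flux `f(q) = (rρu, rρu², rρuv, ru(ρE+P), 0)`. -/
noncomputable def fvec (γ : ℝ) (a : Prim) : Fin 5 → ℝ :=
  ![a.r * a.ρ * a.u, a.r * a.ρ * a.u ^ 2, a.r * a.ρ * a.u * a.v,
    a.r * a.u * (a.ρ * a.E + pres γ a), 0]

/-- The state of the prescribed stationary solution at radius `r`
(zero radial velocity). -/
def eqPrim (ρE vE EE : ℝ → ℝ) (r : ℝ) : Prim :=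
  ⟨r, ρE r, 0, vE r, EE r⟩

/-- Pressure fluctuation `P^f = P - P^E(r)` relative to the stationary
solution. -/
noncomputable def Pf (γ : ℝ) (ρE vE EE : ℝ → ℝ) (a : Prim) : ℝ :=
  pres γ a - pres γ (eqPrim ρE vE EE a.r)

/-- Fluctuation `(rρ)^f = rρ - rρ^E(r)`. -/
def rρf (ρE : ℝ → ℝ) (a : Prim) : ℝ := a.r * a.ρ - a.r * ρE a.r

/-- `ζ_r = G mₛ/r² - v²/r`. -/
noncomputable def ζr (G ms : ℝ) (a : Prim) : ℝ :=
  G * ms / a.r ^ 2 - a.v ^ 2 / a.r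

/-- Fluctuation `ζ_r^f = ((v^E)² - v²)/r`. -/
noncomputable def ζrf (vE : ℝ → ℝ) (a : Prim) : ℝ :=
  ((vE a.r) ^ 2 - a.v ^ 2) / a.r

/-- Nonconservative jump term `B(q_b - q_a) = (0, b₂, b₃, b₄, 0)` between two
states, with arithmetic-mean interface values for the fluctuation quantities
and given (arbitrary) interface values `rρEh = (rρ)^E_{1/2}` and
`ζrh = (ζ_r)_{1/2}`. -/
noncomputable def Bjump (γ G ms : ℝ) (ρE vE EE : ℝ → ℝ) (rρEh ζrh : ℝ)
    (a b : Prim) : Fin 5 → ℝ :=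
  ![0,
    ((a.r + b.r) / 2) * (Pf γ ρE vE EE b - Pf γ ρE vE EE a)
      + (rρEh * ((ζrf vE a + ζrf vE b) / 2)
          + ((rρf ρE a + rρf ρE b) / 2) * ζrh) * (b.r - a.r),
    (((a.r * a.ρ * a.u + b.r * b.ρ * b.u) / 2) / ((a.r + b.r) / 2))
      * ((a.v + b.v) / 2) * (b.r - a.r),
    ((a.r * a.ρ * a.u + b.r * b.ρ * b.u) / 2)
      * (G * ms / ((a.r + b.r) / 2) ^ 2) * (b.r - a.r),
    0]


/-- Conserved variables `q = (rρ, rρu, rρv, rρE, r)`. -/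
def qvec (a : Prim) : Fin 5 → ℝ :=
  ![a.r * a.ρ, a.r * a.ρ * a.u, a.r * a.ρ * a.v, a.r * a.ρ * a.E, a.r]

/-- Angular flux `g(q) = (ρv, ρuv, ρv² + P, v(ρE+P), 0)`. -/
noncomputable def gvec (γ : ℝ) (a : Prim) : Fin 5 → ℝ :=
  ![a.ρ * a.v, a.ρ * a.u * a.v, a.ρ * a.v ^ 2 + pres γ a,
    a.v * (a.ρ * a.E + pres γ a), 0]

/-- Two-dimensional well balanced HLL viscosity
`V(Δq) = α⁰ Ĩ(Δq) + α¹ R(Δq)` with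
`Ĩ(Δq) = Ĩ_{1D}(Δq) n_r + I Δq n_φ`,
`Ĩ_{1D} = (b₂μ, Δ(rρu), b₂μ v̄, b₂μ z̄, 0)` and
`R(Δq) = n_r (f-difference + B(Δq)) + n_φ (g-difference)`. -/
noncomputable def VHLL (γ G ms : ℝ) (ρE vE EE : ℝ → ℝ)
    (rρEh ζrh zbar α0 α1 nr nφ : ℝ) (a b : Prim) : Fin 5 → ℝ :=
  let Bv := Bjump γ G ms ρE vE EE rρEh ζrh a b
  let b2 := Bv 1
  let μ := (a.ρ + b.ρ) / (γ * (pres γ a + pres γ b))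
  let It := nr • (![b2 * μ, b.r * b.ρ * b.u - a.r * a.ρ * a.u,
      b2 * μ * ((a.v + b.v) / 2), b2 * μ * zbar, 0] : Fin 5 → ℝ)
    + nφ • (qvec b - qvec a)
  let Rv := nr • (fvec γ b - fvec γ a + Bv) + nφ • (gvec γ b - gvec γ a)
  α0 • It + α1 • Rv

/-- Well balanced path-conservative ALE flux
`D(q⁻,q⁺)·ñ = ½(f(q⁺)+f(q⁻)+B(q⁺-q⁻)) ñ_r + ½(g(q⁺)+g(q⁻)) ñ_φ
+ ½(q⁺+q⁻) ñ_t - ½ V(q⁺-q⁻)`. -/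
noncomputable def Dflux (γ G ms : ℝ) (ρE vE EE : ℝ → ℝ)
    (rρEh ζrh zbar α0 α1 : ℝ) (nr nφ nt : ℝ) (a b : Prim) : Fin 5 → ℝ :=
  (1 / 2 : ℝ) • (nr • (fvec γ a + fvec γ b + Bjump γ G ms ρE vE EE rρEh ζrh a b)
      + nφ • (gvec γ a + gvec γ b) + nt • (qvec a + qvec b))
    - (1 / 2 : ℝ) • VHLL γ G ms ρE vE EE rρEh ζrh zbar α0 α1 nr nφ a b

/-- on a mesh element satisfying the well balancing constraints
(vertical edges on lines `r = const`, the other two edges parallel, barycenters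
of `I`, `J₁`, `J₂` on the same line `r = r_i`, so the two corresponding
space-time surfaces have equal areas and opposite normals and
AUX -/
lemma Pf_eqPrim (γ : ℝ) (ρE vE EE : ℝ → ℝ) (r : ℝ) :
    Pf γ ρE vE EE (eqPrim ρE vE EE r) = 0 := by
  simp [Pf, eqPrim]

lemma rρf_eqPrim (ρE vE EE : ℝ → ℝ) (r : ℝ) :
    rρf ρE (eqPrim ρE vE EE r) = 0 := by
  simp [rρf, eqPrim]

lemma ζrf_eqPrim (ρE vE EE : ℝ → ℝ) (r : ℝ) :
    ζrf vE (eqPrim ρE vE EE r) = 0 := by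
  simp [ζrf, eqPrim]

lemma Bjump_eqPrim (γ G ms : ℝ) (ρE vE EE : ℝ → ℝ) (rρEh ζrh r1 r2 : ℝ) :
    Bjump γ G ms ρE vE EE rρEh ζrh (eqPrim ρE vE EE r1)
      (eqPrim ρE vE EE r2) = 0 := by
  funext i
  fin_cases i <;>
    simp [Bjump, Pf, rρf, ζrf, eqPrim]

lemma fvec_eqPrim (γ : ℝ) (ρE vE EE : ℝ → ℝ) (r : ℝ) :
    fvec γ (eqPrim ρE vE EE r) = 0 := by
  funext i
  fin_cases i <;> simp [fvec, eqPrim]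

lemma Bjump_self (γ G ms : ℝ) (ρE vE EE : ℝ → ℝ) (rρEh ζrh : ℝ) (a : Prim) :
    Bjump γ G ms ρE vE EE rρEh ζrh a a = 0 := by
  funext i
  fin_cases i <;> simp [Bjump, sub_self]

lemma VHLL_self (γ G ms : ℝ) (ρE vE EE : ℝ → ℝ)
    (rρEh ζrh zbar α0 α1 nr nφ : ℝ) (a : Prim) :
    VHLL γ G ms ρE vE EE rρEh ζrh zbar α0 α1 nr nφ a a = 0 := by
  funext i
  fin_cases i <;>
    simp [VHLL, Bjump_self, sub_self]

lemma Dflux_vert (γ G ms : ℝ) (ρE vE EE : ℝ → ℝ)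
    (rρEh ζrh zbar α0 α1 s r1 r2 : ℝ) :
    Dflux γ G ms ρE vE EE rρEh ζrh zbar α0 α1 s 0 0
      (eqPrim ρE vE EE r1) (eqPrim ρE vE EE r2) = 0 := by
  simp only [Dflux, VHLL, Bjump_eqPrim, fvec_eqPrim, Pi.zero_apply,
    add_zero, zero_add, smul_zero, zero_smul, sub_zero]
  funext i
  fin_cases i <;> simp [eqPrim]

lemma Dflux_pair (γ G ms : ℝ) (ρE vE EE : ℝ → ℝ)
    (rρEh₁ ζrh₁ zbar₁ α0₁ α1₁ rρEh₂ ζrh₂ zbar₂ α0₂ α1₂ nr nφ nt : ℝ)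
    (a : Prim) :
    Dflux γ G ms ρE vE EE rρEh₁ ζrh₁ zbar₁ α0₁ α1₁ nr nφ nt a a
      + Dflux γ G ms ρE vE EE rρEh₂ ζrh₂ zbar₂ α0₂ α1₂
          (-nr) (-nφ) (-nt) a a = 0 := by
  simp only [Dflux, VHLL_self, Bjump_self, smul_zero, add_zero, sub_zero]
  module

/-- STATEMENT 16 (original docstring continues:
`Q^E_{J₁} = Q^E_{J₂} = Q^E_I`), if every state entering the fluxes is the
corresponding equilibrium value of a stationary solution with zero radial
velocity, then the vertical-surface flux contributions vanish individually,
the contributions of the two parallel surfaces cancel each other exactly, the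
total numerical flux sum vanishes, and consequently
`|T_I^{n+1}| Q_I^{n+1} = |T_I^n| Q_I^n`. -/
theorem ale_wb_scheme_preserves_equilibrium
    (γ G ms : ℝ) (hγ : 1 < γ)
    (ρE vE EE : ℝ → ℝ) (hρE : ∀ x : ℝ, 0 < ρE x)
    (rI : ℝ) (hrI : 0 < rI)
    -- states of the element and of its neighbors across the parallel edges
    (aI aJ1 aJ2 : Prim)
    (haI : aI = eqPrim ρE vE EE rI)
    (haJ1 : aJ1 = eqPrim ρE vE EE rI)
    (haJ2 : aJ2 = eqPrim ρE vE EE rI)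
    -- common area and space-time normal of the two parallel surfaces
    (σ : ℝ) (hσ : 0 < σ) (nr nφ nt : ℝ)
    -- (arbitrary) parameters of the two parallel-surface fluxes
    (rρEh₁ ζrh₁ zbar₁ α0₁ α1₁ rρEh₂ ζrh₂ zbar₂ α0₂ α1₂ : ℝ)
    -- vertical space-time surfaces: areas, normal signs, neighbor radii
    (m : ℕ) (σv : Fin m → ℝ) (hσv : ∀ k, 0 ≤ σv k)
    (sg : Fin m → ℝ) (hsg : ∀ k, sg k = 1 ∨ sg k = -1)
    (rv : Fin m → ℝ) (hrv : ∀ k, 0 < rv k)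
    -- (arbitrary) parameters of the vertical-surface fluxes
    (rρEhv ζrhv zbarv α0v α1v : Fin m → ℝ)
    -- space-time volumes and updated state
    (Tn Tn1 : ℝ) (Qnew : Fin 5 → ℝ)
    (hupd : Tn1 • Qnew = Tn • qvec aI
      - (σ • Dflux γ G ms ρE vE EE rρEh₁ ζrh₁ zbar₁ α0₁ α1₁ nr nφ nt aI aJ1
        + σ • Dflux γ G ms ρE vE EE rρEh₂ ζrh₂ zbar₂ α0₂ α1₂
            (-nr) (-nφ) (-nt) aI aJ2
        + ∑ k : Fin m, σv k • Dflux γ G ms ρE vE EE (rρEhv k) (ζrhv k)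
            (zbarv k) (α0v k) (α1v k) (sg k) 0 0 aI
            (eqPrim ρE vE EE (rv k)))) :
    (∀ k : Fin m,
      Dflux γ G ms ρE vE EE (rρEhv k) (ζrhv k) (zbarv k) (α0v k) (α1v k)
        (sg k) 0 0 aI (eqPrim ρE vE EE (rv k)) = 0) ∧
    (σ • Dflux γ G ms ρE vE EE rρEh₁ ζrh₁ zbar₁ α0₁ α1₁ nr nφ nt aI aJ1
      + σ • Dflux γ G ms ρE vE EE rρEh₂ ζrh₂ zbar₂ α0₂ α1₂
          (-nr) (-nφ) (-nt) aI aJ2 = 0) ∧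
    (σ • Dflux γ G ms ρE vE EE rρEh₁ ζrh₁ zbar₁ α0₁ α1₁ nr nφ nt aI aJ1
      + σ • Dflux γ G ms ρE vE EE rρEh₂ ζrh₂ zbar₂ α0₂ α1₂
          (-nr) (-nφ) (-nt) aI aJ2
      + ∑ k : Fin m, σv k • Dflux γ G ms ρE vE EE (rρEhv k) (ζrhv k)
          (zbarv k) (α0v k) (α1v k) (sg k) 0 0 aI
          (eqPrim ρE vE EE (rv k)) = 0) ∧
    Tn1 • Qnew = Tn • qvec aI := by
  subst haI haJ1 haJ2
  have h1 : ∀ k : Fin m,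
      Dflux γ G ms ρE vE EE (rρEhv k) (ζrhv k) (zbarv k) (α0v k) (α1v k)
        (sg k) 0 0 (eqPrim ρE vE EE rI) (eqPrim ρE vE EE (rv k)) = 0 :=
    fun k => Dflux_vert γ G ms ρE vE EE _ _ _ _ _ _ _ _
  have h2 : σ • Dflux γ G ms ρE vE EE rρEh₁ ζrh₁ zbar₁ α0₁ α1₁ nr nφ nt
        (eqPrim ρE vE EE rI) (eqPrim ρE vE EE rI)
      + σ • Dflux γ G ms ρE vE EE rρEh₂ ζrh₂ zbar₂ α0₂ α1₂
          (-nr) (-nφ) (-nt) (eqPrim ρE vE EE rI) (eqPrim ρE vE EE rI) = 0 := by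
    rw [← smul_add, Dflux_pair, smul_zero]
  have h3 : (∑ k : Fin m, σv k • Dflux γ G ms ρE vE EE (rρEhv k) (ζrhv k)
      (zbarv k) (α0v k) (α1v k) (sg k) 0 0 (eqPrim ρE vE EE rI)
      (eqPrim ρE vE EE (rv k))) = 0 := by
    refine Finset.sum_eq_zero fun k _ => ?_
    rw [h1 k, smul_zero]
  refine ⟨h1, h2, ?_, ?_⟩
  · rw [h2, h3, zero_add]
  · rw [hupd, h2, h3, zero_add, sub_zero]
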